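/- Let X be a uniformly convex Banach space satisfying Opial's condition, C a nonempty weakly compact convex subset, and T : C → C a mapping satisfying condition (D_a). Let {x_n} be generated by x_1 ∈ C, z_n = (1 − c_n)x_n + c_n T x_n, y_n = (1 − b_n)z_n + b_n T z_n, x_{n+1} = (1 − a_n)T z_n + a_n T y_n, with 0 < a ≤ a_n, b_n, c_n ≤ b < 1. Then {x_n} converges weakly to a fixed point of T. -/

import Mathlib

open Filter Topology

variable {X : Type*}

/-- The set `C(T, x, α)` from the definition of condition `(D_a)`. -/
def DaSet [NormedAddCommGroup X] [NormedSpace ℝ X]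
    (C : Set X) (T : X → X) (x : X) (α : ℝ) : Set X :=
  {y ∈ C | ∃ p ∈ C, ∃ q ∈ C, ‖T p - p‖ ≤ ‖T x - x‖ ∧ ‖T q - q‖ ≤ ‖T x - x‖ ∧
    y = (1 - α) • p + α • T q}

/-- `T` satisfies condition `(D_a)` on `C` with constant `a`. -/
def CondDa [NormedAddCommGroup X] [NormedSpace ℝ X]
    (C : Set X) (T : X → X) (a : ℝ) : Prop :=
  ∀ α ∈ Set.Icc a 1, ∀ x ∈ C, ∀ y ∈ DaSet C T x α, ‖T x - T y‖ ≤ ‖x - y‖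

/-- Weak convergence of a sequence in a normed space. -/
def WeakConv [NormedAddCommGroup X] [NormedSpace ℝ X] (u : ℕ → X) (x : X) : Prop :=
  ∀ f : X →L[ℝ] ℝ, Tendsto (fun n => f (u n)) atTop (𝓝 (f x))

/-- Opial's condition. -/
def OpialCond (X : Type*) [NormedAddCommGroup X] [NormedSpace ℝ X] : Prop :=
  ∀ (u : ℕ → X) (x : X), WeakConv u x → ∀ y, y ≠ x →
    liminf (fun n => ‖u n - x‖) atTop < liminf (fun n => ‖u n - y‖) atTop

/-! Taking `p = q` a fixed point in condition `(D_a)` shows that `T` is quasi-nonexpansive, so the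
distance from `x n` to any fixed point is nonincreasing and converges. A fixed point exists: along
the Krasnoselskii iteration `v (k + 1) = (1 - a) • v k + a • T (v k)` condition `(D_a)` and Schu's
uniform-convexity lemma make the bounded sequence `v` have asymptotically constant increments,
which forces its residuals `‖T (v k) - v k‖` to `0`, and Opial's condition makes `I - T`
demiclosed at `0`. Schu's lemma applied to `z n` then gives `‖T (x n) - x n‖ → 0`, so every weak
subsequential limit of `x` is a fixed point, and Opial's condition makes this limit unique.
Weak sequential compactness of `C` comes from metrizability of the weak topology on the
intersection of `C` with a separable closed subspace. -/

section WeakTopology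

variable [NormedAddCommGroup X] [NormedSpace ℝ X]

lemma continuous_apply_toWeakSpace_symm (f : X →L[ℝ] ℝ) :
    Continuous fun x : WeakSpace ℝ X => f ((toWeakSpace ℝ X).symm x) :=
  WeakBilin.eval_continuous (topDualPairing ℝ X).flip f

lemma weakConv_of_tendsto_toWeakSpace {u : ℕ → X} {p : X}
    (h : Tendsto (fun n => toWeakSpace ℝ X (u n)) atTop (𝓝 (toWeakSpace ℝ X p))) :
    WeakConv u p := fun f =>
  ((continuous_apply_toWeakSpace_symm f).tendsto _).comp h

lemma isBounded_of_isCompact_toWeakSpace_image {C : Set X}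
    (hC : IsCompact (toWeakSpace ℝ X '' C)) : Bornology.IsBounded C := by
  have hK := hC.image (NormedSpace.inclusionInDoubleDualWeak ℝ X).continuous
  have hb := WeakDual.isBounded_iff_isVonNBounded.2 (hK.isVonNBounded ℝ)
  rw [← WeakDual.isBounded_toWeakDual_preimage_iff_isBounded, isBounded_iff_forall_norm_le] at hb
  obtain ⟨R, hR⟩ := hb
  refine isBounded_iff_forall_norm_le.2 ⟨R, fun x hx => ?_⟩
  rw [← (NormedSpace.inclusionInDoubleDualLi ℝ (E := X)).norm_map x]
  exact hR _ ⟨_, ⟨x, hx, rfl⟩, rfl⟩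

lemma TopologicalSpace.IsSeparable.exists_seq_dual_separating {S : Set X}
    (hS : TopologicalSpace.IsSeparable S) :
    ∃ F : ℕ → X →L[ℝ] ℝ, ∀ v ∈ S, (∀ k, F k v = 0) → v = 0 := by
  obtain ⟨c, hc, hSc⟩ := hS
  obtain ⟨g, hg⟩ := (hc.insert 0).exists_eq_range (Set.insert_nonempty 0 c)
  choose F hF1 hFg using fun k => exists_dual_vector'' ℝ (g k)
  refine ⟨F, fun v hv hFv => ?_⟩
  by_contra hv0
  have hv3 : 0 < ‖v‖ / 3 := by positivity
  have hv_cl : v ∈ closure (Set.range g) := hg ▸ closure_mono (Set.subset_insert 0 c) (hSc hv)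
  obtain ⟨_, ⟨k, rfl⟩, hk⟩ := Metric.mem_closure_iff.1 hv_cl _ hv3
  rw [dist_eq_norm] at hk
  -- `F k` norms `g k` and vanishes at `v`, so `g k` is no longer than its distance to `v`
  have hgk : ‖g k‖ ≤ ‖g k - v‖ := calc
    ‖g k‖ = F k (g k - v) := by rw [map_sub, hFv k, sub_zero, hFg k, RCLike.ofReal_real_eq_id, id]
    _ ≤ ‖F k‖ * ‖g k - v‖ := le_of_abs_le ((F k).le_opNorm _)
    _ ≤ ‖g k - v‖ := mul_le_of_le_one_left (norm_nonneg _) (hF1 k)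
  linarith [norm_sub_norm_le v (g k), norm_sub_rev v (g k)]

lemma exists_strictMono_weakConv_of_isCompact {C : Set X}
    (hC : IsCompact (toWeakSpace ℝ X '' C)) {u : ℕ → X} (hu : ∀ n, u n ∈ C) :
    ∃ p ∈ C, ∃ φ : ℕ → ℕ, StrictMono φ ∧ WeakConv (u ∘ φ) p := by
  set V := (Submodule.span ℝ (Set.range u)).topologicalClosure
  have huV : ∀ n, u n ∈ V := fun n =>
    (Submodule.span ℝ (Set.range u)).le_topologicalClosure (Submodule.subset_span ⟨n, rfl⟩)
  have hVsep : TopologicalSpace.IsSeparable (V : Set X) := by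
    rw [Submodule.topologicalClosure_coe]
    exact (Set.countable_range u).isSeparable.span.closure
  obtain ⟨F, hF⟩ := hVsep.exists_seq_dual_separating
  have hVweak : IsClosed (toWeakSpace ℝ X '' V) := by
    have hVcl : IsClosed (V : Set X) := Submodule.isClosed_topologicalClosure _
    rw [← hVcl.closure_eq, V.convex.toWeakSpace_closure (𝕜 := ℝ)]
    exact isClosed_closure
  set K := toWeakSpace ℝ X '' (C ∩ V) with hKdef
  have hK : IsCompact K := by
    rw [hKdef, Set.image_inter (toWeakSpace ℝ X).injective]
    exact hC.inter_right hVweak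
  have : CompactSpace K := isCompact_iff_compactSpace.mp hK
  have : TopologicalSpace.MetrizableSpace K :=
    Metric.PiNatEmbed.TopologicalSpace.MetrizableSpace.of_countable_separating
      (fun k (x : K) => F k ((toWeakSpace ℝ X).symm x))
      (fun k => (continuous_apply_toWeakSpace_symm (F k)).comp continuous_subtype_val)
      (by
        rintro ⟨_, a, ha, rfl⟩ ⟨_, b, hb, rfl⟩ hab
        by_contra! h
        refine hab (Subtype.ext (congrArg (toWeakSpace ℝ X)
          (sub_eq_zero.1 (hF _ (V.sub_mem ha.2 hb.2) fun k => ?_))))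
        simpa [sub_eq_zero] using h k)
  obtain ⟨q, φ, hφ, hlim⟩ := CompactSpace.tendsto_subseq
    (fun n => (⟨toWeakSpace ℝ X (u n), u n, ⟨hu n, huV n⟩, rfl⟩ : K))
  obtain ⟨p, hp, hpq⟩ := q.2
  refine ⟨p, hp.1, φ, hφ, weakConv_of_tendsto_toWeakSpace ?_⟩
  rw [hpq]
  exact (continuous_subtype_val.tendsto q).comp hlim

end WeakTopology

section UniformConvexity

variable [NormedAddCommGroup X] [NormedSpace ℝ X] [UniformConvexSpace X]

lemma exists_forall_norm_add_le_two_sub_mul {ε : ℝ} (hε : 0 < ε) :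
    ∃ δ > 0, ∀ r > 0, ∀ ⦃x y : X⦄, ‖x‖ ≤ r → ‖y‖ ≤ r → ε * r ≤ ‖x - y‖ →
      ‖x + y‖ ≤ (2 - δ) * r := by
  obtain ⟨δ, hδ, h⟩ := exists_forall_closed_ball_dist_add_le_two_sub X hε
  refine ⟨δ, hδ, fun r hr x y hx hy hxy => ?_⟩
  have hr' : 0 ≤ r⁻¹ := inv_nonneg.2 hr.le
  have hscaled := h (x := r⁻¹ • x) (y := r⁻¹ • y)
    (by rwa [norm_smul_of_nonneg hr', inv_mul_le_one₀ hr])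
    (by rwa [norm_smul_of_nonneg hr', inv_mul_le_one₀ hr])
    (by rwa [← smul_sub, norm_smul_of_nonneg hr', le_inv_mul_iff₀ hr, mul_comm])
  rwa [← smul_add, norm_smul_of_nonneg hr', inv_mul_le_iff₀ hr, mul_comm] at hscaled

lemma exists_forall_norm_convexCombo_le {ε s t : ℝ} (hε : 0 < ε) (hs : 0 < s) (ht : t < 1) :
    ∃ κ > 0, ∀ θ ∈ Set.Icc s t, ∀ r > 0, ∀ ⦃x y : X⦄, ‖x‖ ≤ r → ‖y‖ ≤ r →
      ε * r ≤ ‖x - y‖ → ‖θ • x + (1 - θ) • y‖ ≤ (1 - κ) * r := by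
  obtain ⟨δ, hδ, h⟩ := exists_forall_norm_add_le_two_sub_mul (X := X) hε
  have half : ∀ θ, 0 ≤ θ → θ ≤ 1 / 2 → ∀ r > 0, ∀ ⦃x y : X⦄, ‖x‖ ≤ r → ‖y‖ ≤ r →
      ε * r ≤ ‖x - y‖ → ‖θ • x + (1 - θ) • y‖ ≤ (1 - θ * δ) * r := by
    intro θ h0 h1 r hr x y hx hy hxy
    calc ‖θ • x + (1 - θ) • y‖ = ‖θ • (x + y) + (1 - 2 * θ) • y‖ := by congr 1; module
      _ ≤ θ * ‖x + y‖ + (1 - 2 * θ) * ‖y‖ := by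
        refine (norm_add_le _ _).trans ?_
        rw [norm_smul_of_nonneg h0, norm_smul_of_nonneg (by linarith)]
      _ ≤ θ * ((2 - δ) * r) + (1 - 2 * θ) * r := by
        gcongr
        · exact h r hr hx hy hxy
        · linarith
      _ = (1 - θ * δ) * r := by ring
  refine ⟨min s (1 - t) * δ, by have := lt_min hs (sub_pos.2 ht); positivity,
    fun θ ⟨hsθ, hθt⟩ r hr x y hx hy hxy => ?_⟩
  rcases le_total θ (1 / 2) with hθ | hθ
  · refine (half θ (by linarith) hθ r hr hx hy hxy).trans ?_
    gcongr
    exact (min_le_left _ _).trans hsθ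
  · have := half (1 - θ) (by linarith) (by linarith) r hr hy hx (by rwa [norm_sub_rev])
    rw [sub_sub_cancel, add_comm] at this
    refine this.trans ?_
    gcongr
    exact (min_le_right _ _).trans (by linarith)

lemma tendsto_norm_sub_of_tendsto_norm_convexCombo {s t : ℝ} (hs : 0 < s) (ht : t < 1)
    {θ : ℕ → ℝ} (hθ : ∀ n, θ n ∈ Set.Icc s t) {u w : ℕ → X} {D : ℕ → ℝ} {d : ℝ}
    (hu : ∀ n, ‖u n‖ ≤ D n) (hw : ∀ n, ‖w n‖ ≤ D n) (hD : Tendsto D atTop (𝓝 d))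
    (hcomb : Tendsto (fun n => ‖θ n • u n + (1 - θ n) • w n‖) atTop (𝓝 d)) :
    Tendsto (fun n => ‖u n - w n‖) atTop (𝓝 0) := by
  have hd : 0 ≤ d := ge_of_tendsto' hD fun n => (norm_nonneg _).trans (hu n)
  rcases hd.eq_or_lt with rfl | hd
  · refine squeeze_zero (fun n => norm_nonneg _) (fun n => (norm_sub_le _ _).trans
      (add_le_add (hu n) (hw n))) ?_
    simpa using hD.add hD
  refine tendsto_order.2 ⟨fun b hb => Eventually.of_forall fun n => hb.trans_le (norm_nonneg _),
    fun ε hε => ?_⟩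
  by_contra hfreq
  rw [not_eventually] at hfreq
  have hε' : 0 < ε / (d + 1) := by positivity
  obtain ⟨κ, hκ, hκ_le⟩ := exists_forall_norm_convexCombo_le (X := X) hε' hs ht
  have hshort : ∃ᶠ n in atTop, ‖θ n • u n + (1 - θ n) • w n‖ ≤ (1 - κ) * D n := by
    refine (hfreq.and_eventually ((hD.eventually (lt_mem_nhds hd)).and
      (hD.eventually (gt_mem_nhds (lt_add_one d))))).mono fun n ⟨hn, hDpos, hDlt⟩ => ?_
    refine hκ_le (θ n) (hθ n) (D n) hDpos (hu n) (hw n) ?_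
    calc ε / (d + 1) * D n ≤ ε := by
          rw [div_mul_eq_mul_div, div_le_iff₀ (by linarith)]
          exact mul_le_mul_of_nonneg_left hDlt.le hε.le
      _ ≤ ‖u n - w n‖ := not_lt.1 hn
  have := le_of_tendsto_of_tendsto_of_frequently hcomb (hD.const_mul (1 - κ)) hshort
  nlinarith

end UniformConvexity

lemma nonpos_of_le_norm_sub_succ {E : Type*} [SeminormedAddCommGroup E] [NormedSpace ℝ E]
    {v : ℕ → E} {M ρ : ℝ} (hv : ∀ k, ‖v k‖ ≤ M) (hρ : ∀ k, ρ ≤ ‖v (k + 1) - v k‖)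
    (hd : Tendsto (fun k => (v (k + 2) - v (k + 1)) - (v (k + 1) - v k)) atTop (𝓝 0)) :
    ρ ≤ 0 := by
  set d : ℕ → E := fun k => v (k + 1) - v k
  by_contra! hρ0
  have hM : 0 ≤ M := (norm_nonneg _).trans (hv 0)
  obtain ⟨m, hm⟩ := exists_nat_gt (4 * M / ρ)
  have hm0 : (0 : ℝ) < m := (by positivity : (0 : ℝ) ≤ 4 * M / ρ).trans_lt hm
  obtain ⟨K, hK⟩ := eventually_atTop.1
    (NormedAddGroup.tendsto_nhds_zero.1 hd (ρ / (2 * m)) (by positivity))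
  have hclose : ∀ i ≤ m, ‖d (K + i) - d K‖ ≤ ρ / 2 := by
    intro i hi
    have hdist := dist_le_Ico_sum_of_dist_le (f := d) (d := fun _ => ρ / (2 * m))
      (Nat.le_add_right K i) fun {k} hk _ => by
        rw [dist_comm, dist_eq_norm]
        exact (hK k hk).le
    rw [Finset.sum_const, Nat.card_Ico, add_tsub_cancel_left, nsmul_eq_mul, dist_comm,
      dist_eq_norm] at hdist
    refine hdist.trans ?_
    calc (i : ℝ) * (ρ / (2 * m)) ≤ m * (ρ / (2 * m)) := by gcongr
      _ = ρ / 2 := by field_simp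
  have htel : v (K + m) - v K = ∑ i ∈ Finset.range m, d (K + i) :=
    (Finset.sum_range_sub (fun i => v (K + i)) m).symm
  have hsplit : ∑ i ∈ Finset.range m, d (K + i)
      = (m : ℝ) • d K + ∑ i ∈ Finset.range m, (d (K + i) - d K) := by
    rw [Finset.sum_sub_distrib (f := fun i => d (K + i)) (g := fun _ => d K), Finset.sum_const,
      Finset.card_range, Nat.cast_smul_eq_nsmul, add_sub_cancel]
  have hupper : ‖v (K + m) - v K‖ ≤ 2 * M :=
    (norm_sub_le _ _).trans (by linarith [hv (K + m), hv K])
  have hsum : ‖∑ i ∈ Finset.range m, (d (K + i) - d K)‖ ≤ m * (ρ / 2) := by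
    refine (norm_sum_le _ _).trans ?_
    simpa using Finset.sum_le_sum fun i hi => hclose i (Finset.mem_range.1 hi).le
  have hmd : (m : ℝ) * ρ ≤ ‖(m : ℝ) • d K‖ := by
    rw [norm_smul, RCLike.norm_natCast]
    exact mul_le_mul_of_nonneg_left (hρ K) hm0.le
  have htri := norm_sub_le ((m : ℝ) • d K + ∑ i ∈ Finset.range m, (d (K + i) - d K))
    (∑ i ∈ Finset.range m, (d (K + i) - d K))
  rw [add_sub_cancel_right, ← hsplit, ← htel] at htri
  rw [div_lt_iff₀ hρ0] at hm
  linarith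

lemma Convex.one_sub_smul_add_smul_mem {E : Type*} [AddCommGroup E] [Module ℝ E] {C : Set E}
    (hC : Convex ℝ C) {u v : E} (hu : u ∈ C) (hv : v ∈ C) {θ : ℝ} (hθ : θ ∈ Set.Icc 0 1) :
    (1 - θ) • u + θ • v ∈ C :=
  hC hu hv (by linarith [hθ.2]) hθ.1 (by ring)

lemma liminf_le_liminf_of_le_add {f g e : ℕ → ℝ} (hf : IsBoundedUnder (· ≥ ·) atTop f)
    (hg : IsBoundedUnder (· ≤ ·) atTop g) (he : Tendsto e atTop (𝓝 0))
    (hle : ∀ᶠ n in atTop, f n ≤ g n + e n) : liminf f atTop ≤ liminf g atTop := by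
  by_contra! h
  obtain ⟨c, hgc, hcf⟩ := exists_between h
  obtain ⟨c', hcc', hc'f⟩ := exists_between hcf
  obtain ⟨n, hgn, hfn, hen, hlen⟩ :=
    ((frequently_lt_of_liminf_lt hg.isCoboundedUnder_ge hgc).and_eventually
      ((eventually_lt_of_lt_liminf hc'f hf).and
        ((he.eventually (gt_mem_nhds (sub_pos.2 hcc'))).and hle))).exists
  linarith

namespace CondDa

variable [NormedAddCommGroup X] [NormedSpace ℝ X] {C : Set X} {T : X → X} {a : ℝ}

lemma norm_sub_le_of_norm_sub_le (hDa : CondDa C T a) (hconv : Convex ℝ C)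
    (hT : Set.MapsTo T C C) (ha : a ∈ Set.Icc 0 1) {x w : X} (hx : x ∈ C) (hw : w ∈ C)
    (hxw : ‖T w - w‖ ≤ ‖T x - x‖) :
    ‖T x - T ((1 - a) • w + a • T w)‖ ≤ ‖x - ((1 - a) • w + a • T w)‖ :=
  hDa a ⟨le_rfl, ha.2⟩ x hx _
    ⟨hconv.one_sub_smul_add_smul_mem hw (hT hw) ha, w, hw, w, hw, hxw, hxw, rfl⟩

lemma norm_map_sub_le_of_isFixedPt (hDa : CondDa C T a) (ha : a ≤ 1) {q w : X} (hq : q ∈ C)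
    (hTq : Function.IsFixedPt T q) (hw : w ∈ C) : ‖T w - q‖ ≤ ‖w - q‖ := by
  have hq' : q ∈ DaSet C T w a :=
    ⟨hq, q, hq, q, hq, by simp [hTq.eq], by simp [hTq.eq], by rw [hTq.eq]; module⟩
  simpa [hTq.eq] using hDa a ⟨le_rfl, ha⟩ w hw q hq'

lemma norm_map_sub_map_averaged_le (hDa : CondDa C T a) (hconv : Convex ℝ C)
    (hT : Set.MapsTo T C C) (ha : a ∈ Set.Icc 0 1) {w : X} (hw : w ∈ C) :
    ‖T w - T ((1 - a) • w + a • T w)‖ ≤ a * ‖T w - w‖ := by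
  refine (hDa.norm_sub_le_of_norm_sub_le hconv hT ha hw hw le_rfl).trans_eq ?_
  rw [show w - ((1 - a) • w + a • T w) = a • (w - T w) by module, norm_smul_of_nonneg ha.1,
    norm_sub_rev]

lemma norm_sub_map_le (hDa : CondDa C T a) (hconv : Convex ℝ C) (hT : Set.MapsTo T C C)
    (ha : a ∈ Set.Icc 0 1) {x w : X} (hx : x ∈ C) (hw : w ∈ C) (hxw : ‖T w - w‖ ≤ ‖T x - x‖) :
    ‖w - T x‖ ≤ ‖w - x‖ + (1 + 2 * a) * ‖T w - w‖ := by
  set w' := (1 - a) • w + a • T w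
  have h1 := hDa.norm_sub_le_of_norm_sub_le hconv hT ha hx hw hxw
  have h2 := hDa.norm_map_sub_map_averaged_le hconv hT ha hw
  have h3 : ‖w - w'‖ = a * ‖T w - w‖ := by
    rw [show w - w' = a • (w - T w) by module, norm_smul_of_nonneg ha.1, norm_sub_rev]
  have t1 := norm_sub_le_norm_sub_add_norm_sub w (T w) (T x)
  have t2 := norm_sub_le_norm_sub_add_norm_sub (T w) (T w') (T x)
  have t3 := norm_sub_le_norm_sub_add_norm_sub x w w'
  rw [norm_sub_rev w (T w), norm_sub_rev (T w') (T x)] at *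
  rw [norm_sub_rev x w] at t3
  linarith

lemma isFixedPt_of_weakConv (hOp : OpialCond X) (hDa : CondDa C T a) (hconv : Convex ℝ C)
    (hT : Set.MapsTo T C C) (ha : a ∈ Set.Icc 0 1) (hCb : Bornology.IsBounded C) {u : ℕ → X}
    {p : X} (hu : ∀ n, u n ∈ C) (hp : p ∈ C) (hup : WeakConv u p)
    (hres : Tendsto (fun n => ‖T (u n) - u n‖) atTop (𝓝 0)) : Function.IsFixedPt T p := by
  by_contra hne
  obtain ⟨B, hB⟩ := hCb.exists_norm_le
  have hclose : ∀ᶠ n in atTop, ‖u n - T p‖ ≤ ‖u n - p‖ + (1 + 2 * a) * ‖T (u n) - u n‖ := by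
    filter_upwards [hres.eventually (eventually_le_nhds (norm_pos_iff.2 (sub_ne_zero.2 hne)))]
      with n hn
    exact hDa.norm_sub_map_le hconv hT ha hp (hu n) hn
  refine (hOp u p hup (T p) hne).not_ge (liminf_le_liminf_of_le_add ?_ ?_
    (by simpa using hres.const_mul (1 + 2 * a)) hclose)
  · exact isBoundedUnder_of ⟨0, fun n => norm_nonneg _⟩
  · exact isBoundedUnder_of ⟨B + ‖p‖, fun n => (norm_sub_le _ _).trans (by linarith [hB _ (hu n)])⟩

end CondDa

lemma CondDa.tendsto_norm_sub_krasnoselskii [NormedAddCommGroup X] [NormedSpace ℝ X]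
    [UniformConvexSpace X] {C : Set X} {T : X → X} {a : ℝ} (hDa : CondDa C T a)
    (hconv : Convex ℝ C) (hT : Set.MapsTo T C C) (ha : a ∈ Set.Ioo 0 1)
    (hCb : Bornology.IsBounded C) {v : ℕ → X} (hvC : ∀ k, v k ∈ C)
    (hv : ∀ k, v (k + 1) = (1 - a) • v k + a • T (v k)) :
    Tendsto (fun k => ‖T (v k) - v k‖) atTop (𝓝 0) := by
  have ha' : a ∈ Set.Icc 0 1 := Set.Ioo_subset_Icc_self ha
  obtain ⟨B, hB⟩ := hCb.exists_norm_le
  set e : ℕ → X := fun k => T (v k) - v k with he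
  have hinc : ∀ k, v (k + 1) - v k = a • e k := fun k => by rw [hv k]; module
  have hstep : ∀ k, ‖T (v (k + 1)) - T (v k)‖ ≤ a * ‖e k‖ := fun k => by
    rw [norm_sub_rev, hv k]
    exact hDa.norm_map_sub_map_averaged_le hconv hT ha' (hvC k)
  set w : ℕ → X := fun k => a⁻¹ • (T (v (k + 1)) - T (v k)) with hw
  have hw_le : ∀ k, ‖w k‖ ≤ ‖e k‖ := fun k => by
    rw [hw, norm_smul_of_nonneg (inv_nonneg.2 ha.1.le), inv_mul_le_iff₀ ha.1]
    exact hstep k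
  have hcomb : ∀ k, a • w k + (1 - a) • e k = e (k + 1) := fun k => by
    simp only [hw, he, smul_inv_smul₀ ha.1.ne']
    rw [hv k]
    module
  have hanti : Antitone fun k => ‖e k‖ := antitone_nat_of_succ_le fun k => by
    rw [← hcomb k]
    refine (norm_add_le _ _).trans ?_
    rw [norm_smul_of_nonneg ha.1.le, norm_smul_of_nonneg (sub_nonneg.2 ha'.2)]
    nlinarith [hw_le k, ha.1, ha.2]
  have hbdd : BddBelow (Set.range fun k => ‖e k‖) := ⟨0, by rintro _ ⟨k, rfl⟩; positivity⟩
  have hlim := tendsto_atTop_ciInf hanti hbdd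
  have hschu := tendsto_norm_sub_of_tendsto_norm_convexCombo ha.1 ha.2 (θ := fun _ => a)
    (fun _ => ⟨le_rfl, le_rfl⟩) hw_le (fun _ => le_rfl) hlim
    (by simpa only [hcomb] using (tendsto_add_atTop_iff_nat 1).2 hlim)
  have hsecond : Tendsto (fun k => (v (k + 2) - v (k + 1)) - (v (k + 1) - v k)) atTop (𝓝 0) := by
    have h := (tendsto_zero_iff_norm_tendsto_zero.2 hschu).const_smul (a * a)
    rw [smul_zero] at h
    refine h.congr fun k => ?_
    rw [hinc (k + 1), hinc k, ← hcomb k]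
    module
  have hρ := nonpos_of_le_norm_sub_succ (fun k => hB _ (hvC k)) (ρ := a * ⨅ k, ‖e k‖)
    (fun k => by
      rw [hinc k, norm_smul_of_nonneg ha.1.le]
      exact mul_le_mul_of_nonneg_left (ciInf_le hbdd k) ha.1.le) hsecond
  have hρ0 : ⨅ k, ‖e k‖ = 0 :=
    le_antisymm (nonpos_of_mul_nonpos_right hρ ha.1) (le_ciInf fun k => norm_nonneg _)
  rwa [hρ0] at hlim

lemma CondDa.exists_isFixedPt [NormedAddCommGroup X] [NormedSpace ℝ X] [UniformConvexSpace X]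
    (hOp : OpialCond X) {C : Set X} {T : X → X} {a : ℝ} (hDa : CondDa C T a)
    (hconv : Convex ℝ C) (hC : IsCompact (toWeakSpace ℝ X '' C)) (hT : Set.MapsTo T C C)
    (ha : a ∈ Set.Ioo 0 1) {x₀ : X} (hx₀ : x₀ ∈ C) : ∃ q ∈ C, Function.IsFixedPt T q := by
  have ha' : a ∈ Set.Icc 0 1 := Set.Ioo_subset_Icc_self ha
  have hCb := isBounded_of_isCompact_toWeakSpace_image hC
  set v : ℕ → X := fun k => (fun w => (1 - a) • w + a • T w)^[k] x₀
  have hv : ∀ k, v (k + 1) = (1 - a) • v k + a • T (v k) := fun k =>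
    Function.iterate_succ_apply' _ k x₀
  have hvC : ∀ k, v k ∈ C := fun k => by
    induction k with
    | zero => exact hx₀
    | succ k ih => rw [hv k]; exact hconv.one_sub_smul_add_smul_mem ih (hT ih) ha'
  obtain ⟨q, hq, φ, hφ, hvq⟩ := exists_strictMono_weakConv_of_isCompact hC hvC
  exact ⟨q, hq, hDa.isFixedPt_of_weakConv hOp hconv hT ha' hCb (fun k => hvC (φ k)) hq hvq
    ((hDa.tendsto_norm_sub_krasnoselskii hconv hT ha hCb hvC hv).comp hφ.tendsto_atTop)⟩

lemma OpialCond.exists_weakConv [NormedAddCommGroup X] [NormedSpace ℝ X] (hOp : OpialCond X)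
    {C : Set X} (hC : IsCompact (toWeakSpace ℝ X '' C)) {u : ℕ → X} (hu : ∀ n, u n ∈ C)
    {F : Set X} (hlim : ∀ q ∈ F, ∃ L, Tendsto (fun n => ‖u n - q‖) atTop (𝓝 L))
    (hcl : ∀ φ : ℕ → ℕ, Tendsto φ atTop atTop → ∀ p ∈ C, WeakConv (u ∘ φ) p → p ∈ F) :
    ∃ p ∈ F, WeakConv u p := by
  obtain ⟨p, hpC, φ, hφ, hup⟩ := exists_strictMono_weakConv_of_isCompact hC hu
  have hpF := hcl φ hφ.tendsto_atTop p hpC hup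
  have hliminf : ∀ {ψ : ℕ → ℕ}, Tendsto ψ atTop atTop → ∀ {r : X} {L : ℝ},
      Tendsto (fun n => ‖u n - r‖) atTop (𝓝 L) → liminf (fun n => ‖(u ∘ ψ) n - r‖) atTop = L :=
    fun hψ _ _ h => (h.comp hψ).liminf_eq
  have huniq : ∀ ψ : ℕ → ℕ, Tendsto ψ atTop atTop → ∀ q ∈ F, WeakConv (u ∘ ψ) q → q = p := by
    intro ψ hψ q hqF huq
    by_contra hqp
    obtain ⟨Lp, hLp⟩ := hlim p hpF
    obtain ⟨Lq, hLq⟩ := hlim q hqF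
    have h1 := hOp _ p hup q hqp
    have h2 := hOp _ q huq p (Ne.symm hqp)
    rw [hliminf hφ.tendsto_atTop hLp, hliminf hφ.tendsto_atTop hLq] at h1
    rw [hliminf hψ hLp, hliminf hψ hLq] at h2
    exact h1.asymm h2
  refine ⟨p, hpF, fun f => tendsto_of_subseq_tendsto fun ns hns => ?_⟩
  obtain ⟨q, hqC, ms, hms, huq⟩ := exists_strictMono_weakConv_of_isCompact hC fun n => hu (ns n)
  have hψ : Tendsto (ns ∘ ms) atTop atTop := hns.comp hms.tendsto_atTop
  exact ⟨ms, huniq _ hψ q (hcl _ hψ q hqC huq) huq ▸ huq f⟩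

lemma exists_tendsto_of_succ_le_of_le {f g : ℕ → ℝ} (hf : ∀ n, 0 ≤ f n)
    (hfg : ∀ n, f (n + 1) ≤ g n) (hgf : ∀ n, g n ≤ f n) :
    ∃ L, Tendsto f atTop (𝓝 L) ∧ Tendsto g atTop (𝓝 L) := by
  have hlim := tendsto_atTop_ciInf (antitone_nat_of_succ_le fun n => (hfg n).trans (hgf n))
    ⟨0, by rintro _ ⟨n, rfl⟩; exact hf n⟩
  exact ⟨_, hlim, tendsto_of_tendsto_of_tendsto_of_le_of_le ((tendsto_add_atTop_iff_nat 1).2 hlim)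
    hlim hfg hgf⟩

section ThreeStepIteration

variable [NormedAddCommGroup X] [NormedSpace ℝ X] {C : Set X} {T : X → X}
  {an bn cn : ℕ → ℝ} {x y z : ℕ → X}

lemma threeStep_mem (hconv : Convex ℝ C) (hT : Set.MapsTo T C C)
    (han : ∀ n, an n ∈ Set.Icc 0 1) (hbn : ∀ n, bn n ∈ Set.Icc 0 1)
    (hcn : ∀ n, cn n ∈ Set.Icc 0 1) (hx0 : x 0 ∈ C)
    (hz : ∀ n, z n = (1 - cn n) • x n + cn n • T (x n))
    (hy : ∀ n, y n = (1 - bn n) • z n + bn n • T (z n))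
    (hxs : ∀ n, x (n + 1) = (1 - an n) • T (z n) + an n • T (y n)) (n : ℕ) :
    x n ∈ C ∧ z n ∈ C ∧ y n ∈ C := by
  have step : ∀ n, x n ∈ C → z n ∈ C ∧ y n ∈ C := fun n hx => by
    have hzC : z n ∈ C := hz n ▸ hconv.one_sub_smul_add_smul_mem hx (hT hx) (hcn n)
    exact ⟨hzC, hy n ▸ hconv.one_sub_smul_add_smul_mem hzC (hT hzC) (hbn n)⟩
  induction n with
  | zero => exact ⟨hx0, step 0 hx0⟩
  | succ n ih =>
    obtain ⟨-, hzC, hyC⟩ := ih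
    have hxC : x (n + 1) ∈ C := hxs n ▸ hconv.one_sub_smul_add_smul_mem (hT hzC) (hT hyC) (han n)
    exact ⟨hxC, step _ hxC⟩

lemma CondDa.threeStep_tendsto_norm_sub {a : ℝ} (hDa : CondDa C T a) (ha : a ≤ 1) {q : X}
    (hq : q ∈ C) (hTq : Function.IsFixedPt T q) (han : ∀ n, an n ∈ Set.Icc 0 1)
    (hbn : ∀ n, bn n ∈ Set.Icc 0 1) (hcn : ∀ n, cn n ∈ Set.Icc 0 1)
    (hxC : ∀ n, x n ∈ C) (hzC : ∀ n, z n ∈ C) (hyC : ∀ n, y n ∈ C)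
    (hz : ∀ n, z n = (1 - cn n) • x n + cn n • T (x n))
    (hy : ∀ n, y n = (1 - bn n) • z n + bn n • T (z n))
    (hxs : ∀ n, x (n + 1) = (1 - an n) • T (z n) + an n • T (y n)) :
    ∃ L, Tendsto (fun n => ‖x n - q‖) atTop (𝓝 L) ∧ Tendsto (fun n => ‖z n - q‖) atTop (𝓝 L) := by
  have hball : ∀ w ∈ C, T w ∈ Metric.closedBall q ‖w - q‖ := fun w hw => by
    rw [Metric.mem_closedBall, dist_eq_norm]
    exact hDa.norm_map_sub_le_of_isFixedPt ha hq hTq hw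
  have hcenter : ∀ w, w ∈ Metric.closedBall q ‖w - q‖ := fun w => by
    rw [Metric.mem_closedBall, dist_eq_norm]
  have hfejer : ∀ n, ‖x (n + 1) - q‖ ≤ ‖z n - q‖ ∧ ‖z n - q‖ ≤ ‖x n - q‖ := fun n => by
    have hzq : z n ∈ Metric.closedBall q ‖x n - q‖ := hz n ▸
      (convex_closedBall q _).one_sub_smul_add_smul_mem (hcenter _) (hball _ (hxC n)) (hcn n)
    have hyq : y n ∈ Metric.closedBall q ‖z n - q‖ := hy n ▸
      (convex_closedBall q _).one_sub_smul_add_smul_mem (hcenter _) (hball _ (hzC n)) (hbn n)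
    have hTyq : T (y n) ∈ Metric.closedBall q ‖z n - q‖ :=
      Metric.closedBall_subset_closedBall (by simpa [dist_eq_norm] using hyq) (hball _ (hyC n))
    have hxq : x (n + 1) ∈ Metric.closedBall q ‖z n - q‖ := hxs n ▸
      (convex_closedBall q _).one_sub_smul_add_smul_mem (hball _ (hzC n)) hTyq (han n)
    rw [Metric.mem_closedBall, dist_eq_norm] at hzq hxq
    exact ⟨hxq, hzq⟩
  exact exists_tendsto_of_succ_le_of_le (fun n => norm_nonneg _) (fun n => (hfejer n).1)
    (fun n => (hfejer n).2)

end ThreeStepIteration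

theorem stmt9_general [NormedAddCommGroup X] [NormedSpace ℝ X] [UniformConvexSpace X]
    (hOp : OpialCond X)
    {C : Set X} (hconv : Convex ℝ C)
    (hcomp : IsCompact ((toWeakSpace ℝ X) '' C))
    {T : X → X} (hT : Set.MapsTo T C C)
    {a : ℝ} (ha : a ∈ Set.Ioo (1/2 : ℝ) 1) (hDa : CondDa C T a)
    {s t : ℝ} (hs : 0 < s) (ht : t < 1)
    {an bn cn : ℕ → ℝ} (han : ∀ n, s ≤ an n ∧ an n ≤ t)
    (hbn : ∀ n, s ≤ bn n ∧ bn n ≤ t) (hcn : ∀ n, s ≤ cn n ∧ cn n ≤ t)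
    {x y z : ℕ → X} (hx0 : x 0 ∈ C)
    (hz : ∀ n, z n = (1 - cn n) • x n + cn n • T (x n))
    (hy : ∀ n, y n = (1 - bn n) • z n + bn n • T (z n))
    (hxs : ∀ n, x (n + 1) = (1 - an n) • T (z n) + an n • T (y n)) :
    ∃ p ∈ C, T p = p ∧ WeakConv x p := by
  have ha' : a ∈ Set.Ioo 0 1 := ⟨by linarith [ha.1], ha.2⟩
  have hunit : ∀ θ ∈ Set.Icc s t, θ ∈ Set.Icc (0 : ℝ) 1 := fun θ hθ =>
    ⟨hs.le.trans hθ.1, hθ.2.trans ht.le⟩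
  have han' := fun n => hunit _ (han n)
  have hbn' := fun n => hunit _ (hbn n)
  have hcn' := fun n => hunit _ (hcn n)
  have hmem := threeStep_mem hconv hT han' hbn' hcn' hx0 hz hy hxs
  have hxC := fun n => (hmem n).1
  have hdist := fun q (hq : q ∈ C) (hTq : Function.IsFixedPt T q) =>
    hDa.threeStep_tendsto_norm_sub ha.2.le hq hTq han' hbn' hcn' hxC (fun n => (hmem n).2.1)
      (fun n => (hmem n).2.2) hz hy hxs
  obtain ⟨q, hq, hTq⟩ := hDa.exists_isFixedPt hOp hconv hcomp hT ha' hx0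
  obtain ⟨d, hxd, hzd⟩ := hdist q hq hTq
  have hres : Tendsto (fun n => ‖T (x n) - x n‖) atTop (𝓝 0) := by
    have h := tendsto_norm_sub_of_tendsto_norm_convexCombo hs ht hcn
      (fun n => hDa.norm_map_sub_le_of_isFixedPt ha.2.le hq hTq (hxC n)) (fun n => le_rfl) hxd
      (hzd.congr fun n => by rw [hz n]; congr 1; module)
    simpa only [sub_sub_sub_cancel_right] using h
  obtain ⟨p, ⟨hpC, hTp⟩, hxp⟩ :=
    hOp.exists_weakConv hcomp hxC (F := {q ∈ C | Function.IsFixedPt T q})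
    (fun q hq => (hdist q hq.1 hq.2).imp fun _ h => h.1) fun φ hφ p hpC hxp =>
      ⟨hpC, hDa.isFixedPt_of_weakConv hOp hconv hT (Set.Ioo_subset_Icc_self ha')
        (isBounded_of_isCompact_toWeakSpace_image hcomp) (fun n => hxC (φ n)) hpC hxp
        (hres.comp hφ)⟩
  exact ⟨p, hpC, hTp, hxp⟩

theorem stmt9 [NormedAddCommGroup X] [NormedSpace ℝ X] [UniformConvexSpace X]
    [CompleteSpace X]
    (hOp : OpialCond X)
    {C : Set X} (hC : C.Nonempty) (hconv : Convex ℝ C)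
    (hcomp : IsCompact ((toWeakSpace ℝ X) '' C))
    {T : X → X} (hT : Set.MapsTo T C C)
    {a : ℝ} (ha : a ∈ Set.Ioo (1/2 : ℝ) 1) (hDa : CondDa C T a)
    {s t : ℝ} (hs : 0 < s) (ht : t < 1)
    {an bn cn : ℕ → ℝ} (han : ∀ n, s ≤ an n ∧ an n ≤ t)
    (hbn : ∀ n, s ≤ bn n ∧ bn n ≤ t) (hcn : ∀ n, s ≤ cn n ∧ cn n ≤ t)
    {x y z : ℕ → X} (hx0 : x 0 ∈ C)
    (hz : ∀ n, z n = (1 - cn n) • x n + cn n • T (x n))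
    (hy : ∀ n, y n = (1 - bn n) • z n + bn n • T (z n))
    (hxs : ∀ n, x (n + 1) = (1 - an n) • T (z n) + an n • T (y n)) :
    ∃ p ∈ C, T p = p ∧ WeakConv x p :=
  stmt9_general hOp hconv hcomp hT ha hDa hs ht han hbn hcn hx0 hz hy hxs
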